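/- For all t ≥ 1, K₁(t) ≤ 2 K₀(t), where K₀(t) = ∫_0^∞ e^{−t cosh τ} dτ and K₁(t) = ∫_0^∞ e^{−t cosh τ} cosh τ dτ. -/

import Mathlib

open Real MeasureTheory

/-- The modified Bessel function of the second kind of order zero. -/
noncomputable def besselK0 (t : ℝ) : ℝ :=
  ∫ τ in Set.Ioi (0 : ℝ), Real.exp (-t * Real.cosh τ)

/-- The modified Bessel function of the second kind of order one. -/
noncomputable def besselK1 (t : ℝ) : ℝ :=
  ∫ τ in Set.Ioi (0 : ℝ), Real.exp (-t * Real.cosh τ) * Real.cosh τ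

/-!
The claim is `∫₀^∞ e^{-t cosh τ} (cosh τ - 2) dτ ≤ 0`. The integrand is negative while
`cosh τ < 2`: on `(0, log 2]`, where `cosh τ ≤ 5/4`, it is at most `-(3/4) e^{-5t/4}`. Beyond
`arcosh 2` it is bounded by `sinh τ e^{-t cosh τ}`, an exact derivative with integral `e^{-2t}/t`.
For `t ≥ 1` we have `e^{-2t}/t ≤ e^{-3/4} e^{-5t/4}`, and `e^{-3/4} < (3/4) log 2`.
-/

open Set Filter Topology

lemma self_le_cosh {x : ℝ} (hx : 0 ≤ x) : x ≤ cosh x :=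
  (self_le_sinh_iff.2 hx).trans (sinh_lt_cosh x).le

lemma cosh_le_sinh_add_one {x : ℝ} (hx : 0 ≤ x) : cosh x ≤ sinh x + 1 := by
  have hdiff := cosh_sub_sinh x
  have hexp := exp_le_one_iff.2 (neg_nonpos.2 hx)
  linarith

lemma cosh_le_cosh_of_nonneg {x y : ℝ} (hx : 0 ≤ x) (hxy : x ≤ y) : cosh x ≤ cosh y :=
  cosh_le_cosh.2 (by rwa [abs_of_nonneg hx, abs_of_nonneg (hx.trans hxy)])

lemma exp_neg_three_quarters_lt : exp (-(3 / 4)) < 3 / 4 * log 2 := by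
  have hexp : (65 / 32 : ℝ) ≤ exp (3 / 4) := by
    have := quadratic_le_exp_of_nonneg (x := 3 / 4) (by norm_num)
    norm_num at this ⊢
    linarith
  have hinv : exp (-(3 / 4)) ≤ 32 / 65 := by
    rw [exp_neg, inv_le_comm₀ (exp_pos _) (by norm_num)]
    norm_num
    linarith
  linarith [log_two_gt_d9]

section

variable {t : ℝ}

lemma tendsto_exp_neg_mul_cosh_atTop (ht : 0 < t) :
    Tendsto (fun τ => exp (-t * cosh τ)) atTop (𝓝 0) := by
  have hcosh : Tendsto cosh atTop atTop :=
    tendsto_atTop_mono' atTop ((eventually_ge_atTop 0).mono fun _ => self_le_cosh) tendsto_id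
  exact tendsto_exp_atBot.comp ((tendsto_const_mul_atBot_of_neg (neg_neg_of_pos ht)).2 hcosh)

lemma hasDerivAt_neg_exp_neg_mul_cosh_div (ht : t ≠ 0) (x : ℝ) :
    HasDerivAt (fun τ => -exp (-t * cosh τ) / t) (sinh x * exp (-t * cosh x)) x := by
  refine (((hasDerivAt_cosh x).const_mul (-t)).exp.neg.div_const t).congr_deriv ?_
  field_simp

lemma integral_Ioi_sinh_mul_exp_neg_mul_cosh (ht : 0 < t) {a : ℝ} (ha : 0 ≤ a) :
    IntegrableOn (fun τ => sinh τ * exp (-t * cosh τ)) (Ioi a) ∧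
      ∫ τ in Ioi a, sinh τ * exp (-t * cosh τ) = exp (-t * cosh a) / t := by
  have hderiv x (_ : x ∈ Ici a) := hasDerivAt_neg_exp_neg_mul_cosh_div ht.ne' x
  have hnonneg x (hx : x ∈ Ioi a) : 0 ≤ sinh x * exp (-t * cosh x) :=
    mul_nonneg (sinh_nonneg_iff.2 (ha.trans hx.out.le)) (exp_pos _).le
  have hlim : Tendsto (fun τ => -exp (-t * cosh τ) / t) atTop (𝓝 0) := by
    simpa using (tendsto_exp_neg_mul_cosh_atTop ht).neg.div_const t
  refine ⟨integrableOn_Ioi_deriv_of_nonneg' hderiv hnonneg hlim, ?_⟩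
  rw [integral_Ioi_of_hasDerivAt_of_nonneg' hderiv hnonneg hlim]
  ring

lemma integrableOn_exp_neg_mul_cosh (ht : 0 < t) :
    IntegrableOn (fun τ => exp (-t * cosh τ)) (Ioi 0) := by
  refine (exp_neg_integrableOn_Ioi 0 ht).mono' (by fun_prop : Continuous _).aestronglyMeasurable ?_
  filter_upwards [ae_restrict_mem measurableSet_Ioi] with x hx
  rw [norm_of_nonneg (exp_pos _).le, exp_le_exp]
  nlinarith [self_le_cosh hx.out.le]

lemma integrableOn_exp_neg_mul_cosh_mul_cosh (ht : 0 < t) :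
    IntegrableOn (fun τ => exp (-t * cosh τ) * cosh τ) (Ioi 0) := by
  refine ((integral_Ioi_sinh_mul_exp_neg_mul_cosh ht le_rfl).1.add
    (integrableOn_exp_neg_mul_cosh ht)).mono' (by fun_prop : Continuous _).aestronglyMeasurable ?_
  filter_upwards [ae_restrict_mem measurableSet_Ioi] with x hx
  rw [Pi.add_apply, norm_of_nonneg (by positivity)]
  nlinarith [cosh_le_sinh_add_one hx.out.le, exp_pos (-t * cosh x)]

lemma integrableOn_exp_neg_mul_cosh_mul_cosh_sub_two (ht : 0 < t) :
    IntegrableOn (fun τ => exp (-t * cosh τ) * (cosh τ - 2)) (Ioi 0) := by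
  refine ((integrableOn_exp_neg_mul_cosh_mul_cosh ht).sub
    ((integrableOn_exp_neg_mul_cosh ht).const_mul 2)).congr_fun (fun τ _ => ?_) measurableSet_Ioi
  simp only [Pi.sub_apply]
  ring

lemma besselK1_sub_two_mul_besselK0 (ht : 0 < t) :
    besselK1 t - 2 * besselK0 t = ∫ τ in Ioi 0, exp (-t * cosh τ) * (cosh τ - 2) := by
  rw [besselK1, besselK0, ← integral_const_mul, ← integral_sub
    (integrableOn_exp_neg_mul_cosh_mul_cosh ht) ((integrableOn_exp_neg_mul_cosh ht).const_mul 2)]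
  simp only [mul_sub, mul_comm (2 : ℝ)]

lemma intervalIntegral_exp_neg_mul_cosh_mul_cosh_sub_two_le (ht : 0 ≤ t) {a : ℝ} (ha : 0 ≤ a)
    (ha2 : cosh a ≤ 2) :
    ∫ τ in 0..a, exp (-t * cosh τ) * (cosh τ - 2) ≤
      a * (exp (-t * cosh a) * (cosh a - 2)) := by
  calc ∫ τ in 0..a, exp (-t * cosh τ) * (cosh τ - 2)
      ≤ ∫ _ in 0..a, exp (-t * cosh a) * (cosh a - 2) := by
        refine intervalIntegral.integral_mono_on ha
          (Continuous.intervalIntegrable (by fun_prop) 0 a) intervalIntegrable_const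
          fun τ hτ => ?_
        have hcosh : cosh τ ≤ cosh a := cosh_le_cosh_of_nonneg hτ.1 hτ.2
        have hexp : exp (-t * cosh a) ≤ exp (-t * cosh τ) := exp_le_exp.2 (by nlinarith)
        calc exp (-t * cosh τ) * (cosh τ - 2) ≤ exp (-t * cosh τ) * (cosh a - 2) :=
              mul_le_mul_of_nonneg_left (by linarith) (exp_pos _).le
          _ ≤ exp (-t * cosh a) * (cosh a - 2) := mul_le_mul_of_nonpos_right hexp (by linarith)
    _ = a * (exp (-t * cosh a) * (cosh a - 2)) := by
      rw [intervalIntegral.integral_const, smul_eq_mul, sub_zero]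

lemma intervalIntegral_exp_neg_mul_cosh_mul_cosh_sub_two_nonpos {a b : ℝ} (ha : 0 ≤ a)
    (hab : a ≤ b) (hb : cosh b ≤ 2) :
    ∫ τ in a..b, exp (-t * cosh τ) * (cosh τ - 2) ≤ 0 := by
  rw [← neg_nonneg, ← intervalIntegral.integral_neg]
  refine intervalIntegral.integral_nonneg hab fun τ hτ => ?_
  have hcosh : cosh τ ≤ cosh b := cosh_le_cosh_of_nonneg (ha.trans hτ.1) hτ.2
  nlinarith [exp_pos (-t * cosh τ)]

lemma setIntegral_Ioi_exp_neg_mul_cosh_mul_cosh_sub_two_le (ht : 0 < t) {b : ℝ} (hb : 0 ≤ b) :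
    ∫ τ in Ioi b, exp (-t * cosh τ) * (cosh τ - 2) ≤ exp (-t * cosh b) / t := by
  obtain ⟨hint, hval⟩ := integral_Ioi_sinh_mul_exp_neg_mul_cosh ht hb
  rw [← hval]
  refine setIntegral_mono_on ((integrableOn_exp_neg_mul_cosh_mul_cosh_sub_two ht).mono_set
    (Ioi_subset_Ioi hb)) hint measurableSet_Ioi fun τ hτ => ?_
  nlinarith [cosh_le_sinh_add_one (hb.trans hτ.out.le), exp_pos (-t * cosh τ)]

lemma integral_exp_neg_mul_cosh_mul_cosh_sub_two_le (ht : 0 < t) {a b : ℝ} (ha : 0 ≤ a)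
    (hab : a ≤ b) (hb : cosh b ≤ 2) :
    ∫ τ in Ioi 0, exp (-t * cosh τ) * (cosh τ - 2) ≤
      a * (exp (-t * cosh a) * (cosh a - 2)) + exp (-t * cosh b) / t := by
  have hint := integrableOn_exp_neg_mul_cosh_mul_cosh_sub_two ht
  rw [← intervalIntegral.integral_interval_add_Ioi hint (hint.mono_set (Ioi_subset_Ioi ha)),
    ← intervalIntegral.integral_interval_add_Ioi (hint.mono_set (Ioi_subset_Ioi ha))
      (hint.mono_set (Ioi_subset_Ioi (ha.trans hab)))]
  have hhead := intervalIntegral_exp_neg_mul_cosh_mul_cosh_sub_two_le ht.le ha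
    ((cosh_le_cosh_of_nonneg ha hab).trans hb)
  have hmiddle := intervalIntegral_exp_neg_mul_cosh_mul_cosh_sub_two_nonpos (t := t) ha hab hb
  have htail := setIntegral_Ioi_exp_neg_mul_cosh_mul_cosh_sub_two_le ht (ha.trans hab)
  linarith

lemma exp_neg_mul_two_div_le (ht : 1 ≤ t) :
    exp (-t * 2) / t ≤ 3 / 4 * log 2 * exp (-t * (5 / 4)) := by
  have hsplit : exp (-t * 2) = exp (-t * (5 / 4)) * exp (-(3 / 4) * t) := by
    rw [← exp_add]; ring_nf
  have hdecay : exp (-(3 / 4) * t) ≤ exp (-(3 / 4)) := exp_le_exp.2 (by linarith)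
  calc exp (-t * 2) / t ≤ exp (-t * 2) := div_le_self (exp_pos _).le ht
    _ ≤ exp (-t * (5 / 4)) * (3 / 4 * log 2) := by
      rw [hsplit]
      exact mul_le_mul_of_nonneg_left (hdecay.trans exp_neg_three_quarters_lt.le) (exp_pos _).le
    _ = 3 / 4 * log 2 * exp (-t * (5 / 4)) := mul_comm _ _

end

theorem besselK1_le_two_besselK0 (t : ℝ) (ht : 1 ≤ t) : besselK1 t ≤ 2 * besselK0 t := by
  have ht0 : 0 < t := by linarith
  have hcosh_log_two : cosh (log 2) = 5 / 4 := by rw [cosh_log two_pos]; norm_num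
  have hcosh_arcosh_two : cosh (arcosh 2) = 2 := cosh_arcosh one_le_two
  have hlog_le_arcosh : log 2 ≤ arcosh 2 := by
    refine (cosh_strictMonoOn.le_iff_le (log_nonneg one_le_two) (arcosh_nonneg one_le_two)).1 ?_
    rw [hcosh_log_two, hcosh_arcosh_two]
    norm_num
  have hsplit := integral_exp_neg_mul_cosh_mul_cosh_sub_two_le ht0 (log_nonneg one_le_two)
    hlog_le_arcosh hcosh_arcosh_two.le
  rw [hcosh_log_two, hcosh_arcosh_two] at hsplit
  rw [← sub_nonpos, besselK1_sub_two_mul_besselK0 ht0]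
  linarith [exp_neg_mul_two_div_le ht]
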